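/- arXiv:1510.03994 — 6 statements merged into one kernel-verified Lean document; each statement's English description precedes it below -/
import Mathlib

section
/- For words x, y over alphabet A and a subset B ⊆ A: π_B(x) = π_B(y) if and only if (π_B(y) ⊑ x and π_B(x) ⊑ y). -/
namespace List

variable {α : Type*} (p : α → Bool)

theorem filter_sublist_filter_of_filter_sublist {l₁ l₂ : List α} (h : l₁.filter p <+ l₂) :
    l₁.filter p <+ l₂.filter p := by
  simpa only [filter_filter, Bool.and_self] using h.filter p

theorem filter_eq_filter_iff_filter_sublist (l₁ l₂ : List α) :
    l₁.filter p = l₂.filter p ↔ l₂.filter p <+ l₁ ∧ l₁.filter p <+ l₂ := by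
  refine ⟨fun h => ⟨h ▸ filter_sublist, h ▸ filter_sublist⟩, fun ⟨h₂₁, h₁₂⟩ => ?_⟩
  exact (filter_sublist_filter_of_filter_sublist p h₁₂).antisymm
    (filter_sublist_filter_of_filter_sublist p h₂₁)

end List

theorem proj_eq_proj_iff {A : Type*} (B : Set A) [DecidablePred (· ∈ B)] (x y : List A) :
    x.filter (fun a => decide (a ∈ B)) = y.filter (fun a => decide (a ∈ B)) ↔
      ((y.filter (fun a => decide (a ∈ B))).Sublist x ∧
        (x.filter (fun a => decide (a ∈ B))).Sublist y) :=
  List.filter_eq_filter_iff_filter_sublist _ x y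
end

section
/- For a word x over alphabet A and a letter a ∈ A: x starts with a if and only if there exists a word z such that [a] ⊑ z, for every letter b ≠ a the word [b,a] is not a subword of z, z ⊑ x, and π_{A∖{a}}(x) ⊑ z. -/
/-!
For `x = a :: w` take `z = a :: w.filter (· ≠ a)`. Conversely, the two conditions on `z` force
`z` to begin with `a`; if `x` began with another letter `c`, then `z` would be a subword of the
tail of `x`, which has one letter different from `a` fewer than `x` itself, contradicting
`π_{A∖{a}}(x) ⊑ z`.
-/

namespace List

variable {α : Type*}

theorem eq_cons_of_mem_of_forall_not_pair_sublist {a : α} {z : List α} (ha : a ∈ z)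
    (hno : ∀ b, b ≠ a → ¬ [b, a] <+ z) : ∃ z', z = a :: z' := by
  obtain _ | ⟨b, z'⟩ := z
  · simp at ha
  by_cases hb : b = a
  · exact ⟨z', hb ▸ rfl⟩
  have ha' : a ∈ z' := (mem_cons.1 ha).resolve_left fun h => hb h.symm
  exact absurd (cons_sublist_cons.2 (singleton_sublist.2 ha')) (hno b hb)

theorem not_pair_sublist_cons_of_notMem {a b : α} {l : List α} (ha : a ∉ l) (hb : b ≠ a) :
    ¬ [b, a] <+ a :: l := by
  rintro h
  rcases sublist_cons_iff.1 h with h | ⟨r, hr, -⟩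
  · exact ha ((sublist_cons_self b [a]).trans h |>.subset (mem_singleton_self a))
  · exact hb (cons.inj hr).1

theorem not_sublist_of_filter_cons_sublist {p : α → Bool} {c : α} {w l : List α} (hc : p c)
    (hl : (c :: w).filter p <+ l) : ¬ l <+ w := by
  intro hlw
  have h₁ := hl.countP_le (p := p)
  have h₂ := hlw.countP_le (p := p)
  rw [countP_filter] at h₁
  simp only [Bool.and_self, countP_cons_of_pos hc] at h₁
  omega

end List

open List in
theorem starts_with_iff {A : Type*} [DecidableEq A] (x : List A) (a : A) :
    (∃ w, x = a :: w) ↔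
      ∃ z : List A, [a].Sublist z ∧ (∀ b : A, b ≠ a → ¬ [b, a].Sublist z) ∧
        z.Sublist x ∧ (x.filter (fun c => decide (c ≠ a))).Sublist z := by
  constructor
  · rintro ⟨w, rfl⟩
    refine ⟨a :: w.filter (fun c => decide (c ≠ a)), by simp, fun b hb => ?_, ?_, by simp⟩
    · exact not_pair_sublist_cons_of_notMem (by simp) hb
    · exact filter_sublist.cons_cons a
  · rintro ⟨z, ha, hno, hzx, hxz⟩
    obtain ⟨z', rfl⟩ := eq_cons_of_mem_of_forall_not_pair_sublist (singleton_sublist.1 ha) hno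
    obtain _ | ⟨c, w⟩ := x
    · simp at hzx
    by_cases hc : c = a
    · exact ⟨w, hc ▸ rfl⟩
    rcases sublist_cons_iff.1 hzx with hzw | ⟨r, hr, -⟩
    · exact absurd hzw (not_sublist_of_filter_cons_sublist (by simpa using hc) hxz)
    · exact absurd (cons.inj hr).1 (Ne.symm hc)
end

section
/- For a word x over alphabet A and a letter a ∈ A, the following are equivalent: (1) x has no factor aa (i.e., aa does not occur as two consecutive letters of x); (2) for every word z, if [a,a] ⊑ z, π_{A∖{a}}(x) ⊑ z, and z ⊑ x, then there exists a letter b ≠ a such that [a,b,a] ⊑ z. -/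
/-!
If `[a, a] ⊑ z` but `[a, b, a] ⋢ z` for every `b ≠ a`, the occurrences of `a` in `z` are
adjacent, so `aa` is a factor of `z`. If moreover `π(x) ⊑ z ⊑ x`, then `z` arises from `x` by
deleting occurrences of `a` only, so the stretch of `x` covering that factor consists of `a`'s and
`aa` is a factor of `x`. Conversely, if `x = v ++ [a, a] ++ w`, the word `π(v) ++ [a, a] ++ π(w)`
violates the condition.
-/

namespace List

variable {α : Type*} {a : α}

theorem cons_sublist_of_cons_sublist_append {l u m : List α} (hu : a ∉ u)
    (h : a :: l <+ u ++ m) : a :: l <+ m := by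
  obtain ⟨_ | ⟨c, l₁⟩, l₂, hl, hl₁, hl₂⟩ := sublist_append_iff.mp h
  · rw [nil_append] at hl
    exact hl ▸ hl₂
  · obtain ⟨rfl, -⟩ := cons_eq_cons.mp hl
    exact absurd (hl₁.subset mem_cons_self) hu

theorem triple_not_sublist_of_not_mem {b : α} {u v : List α} (hb : b ≠ a) (hu : a ∉ u)
    (hv : a ∉ v) : ¬ [a, b, a] <+ u ++ [a, a] ++ v := by
  intro h
  rw [append_assoc] at h
  have hba : [b, a] <+ a :: v :=
    cons_sublist_cons.mp (cons_sublist_of_cons_sublist_append hu h)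
  rcases sublist_cons_iff.mp hba with h' | ⟨_, h', -⟩
  · exact hv (singleton_sublist.mp ((sublist_cons_self b [a]).trans h'))
  · exact hb (cons_eq_cons.mp h').1

theorem pair_isInfix_of_sublist {z : List α} (haa : [a, a] <+ z)
    (h : ∀ b, b ≠ a → ¬ [a, b, a] <+ z) : [a, a] <:+: z := by
  induction z with
  | nil => simp at haa
  | cons c z ih =>
    by_cases hc : c = a
    · subst hc
      obtain _ | ⟨d, z⟩ := z
      · simp at haa
      by_cases hd : d = c
      · subst hd
        exact (prefix_append [d, d] z).isInfix
      · have hcz : c ∈ z := (by simpa using haa : c = d ∨ c ∈ z).resolve_left (Ne.symm hd)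
        exact absurd (by simpa using hcz) (h d hd)
    · have haa' : [a, a] <+ z := by
        rcases sublist_cons_iff.mp haa with h' | ⟨_, h', -⟩
        · exact h'
        · exact absurd (cons_eq_cons.mp h').1.symm hc
      exact infix_cons (ih haa' fun b hb hs => h b hb (hs.cons c))

theorem replicate_isInfix_of_sublist [DecidableEq α] {k : ℕ} {z x : List α}
    (hz : replicate k a <:+: z) (hzx : z <+ x) (hxz : x.filter (· ≠ a) <+ z) :
    replicate k a <:+: x := by
  obtain ⟨u, v, rfl⟩ := hz
  obtain ⟨x₁₂, x₃, rfl, h₁₂, hv⟩ := append_sublist_iff.mp hzx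
  obtain ⟨x₁, x₂, rfl, hu, hk⟩ := append_sublist_iff.mp h₁₂
  -- Counting letters other than `a`: `x₁` and `x₃` already supply as many as `u` and `v`.
  have hx₂ : x₂ = replicate x₂.length a := by
    have hlen := (hxz.filter (· ≠ a)).length_le
    have := (hu.filter (· ≠ a)).length_le
    have := (hv.filter (· ≠ a)).length_le
    have hrep : (replicate k a).filter (· ≠ a) = [] := by simp
    simp only [filter_append, filter_filter, Bool.and_self, length_append, hrep,
      length_nil] at hlen
    have : (x₂.filter (· ≠ a)).length = 0 := by omega
    simpa [eq_replicate_iff] using this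
  have hkx₂ : k ≤ x₂.length := by simpa using hk.length_le
  have hprefix : replicate k a <+: x₂ := by
    rw [hx₂, ← Nat.add_sub_cancel' hkx₂, ← replicate_append_replicate]
    exact prefix_append _ _
  exact hprefix.isInfix.trans (infix_append x₁ x₂ x₃)

end List

theorem no_factor_aa_iff {A : Type*} [DecidableEq A] (x : List A) (a : A) :
    (¬ ∃ v w : List A, x = v ++ [a, a] ++ w) ↔
      (∀ z : List A, [a, a].Sublist z →
        (x.filter (fun c => decide (c ≠ a))).Sublist z → z.Sublist x →
          ∃ b : A, b ≠ a ∧ [a, b, a].Sublist z) := by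
  have hfactor : (∃ v w, x = v ++ [a, a] ++ w) ↔ [a, a] <:+: x :=
    ⟨fun ⟨v, w, h⟩ => ⟨v, w, h.symm⟩, fun ⟨v, w, h⟩ => ⟨v, w, h.symm⟩⟩
  rw [hfactor]
  constructor
  · intro hx z haa hxz hzx
    by_contra! h
    exact hx (List.replicate_isInfix_of_sublist (k := 2)
      (List.pair_isInfix_of_sublist haa h) hzx hxz)
  · rintro h ⟨v, w, rfl⟩
    obtain ⟨b, hb, hs⟩ := h (v.filter (· ≠ a) ++ [a, a] ++ w.filter (· ≠ a))
      (by simp) (by simp) ((List.filter_sublist.append (.refl _)).append List.filter_sublist)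
    exact List.triple_not_sublist_of_not_mem hb (by simp) (by simp) hs
end

section
/- Two words u and v over a finite alphabet are n-equivalent (written u ∼ₙ v) if they have exactly the same set of subwords of length at most n. Theorem: for n ≥ 2, if u and v are distinct words both of length n+1, then u is not n-equivalent to v; i.e., there is a word w of length at most n that is a subword of exactly one of u and v. -/
/-!
If `a :: u ∼ₙ b :: v` with `a ≠ b` and `|u| = |v| = n ≥ 2`, every length-`n` subword of `a :: u`
starting with `a` must be the tail `v`; deleting the first or the second letter of `u` gives two
such subwords, and comparing them with the symmetric ones of `b :: v` forces `a = b`. Applied to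
the reversed words this also matches the last letters. Cancelling equal first letters lowers `n`
by one, and the induction bottoms out at `[a, c] ∼₁ [b, c]`, where `a = b` is read off the letters.
-/

namespace List

variable {A : Type*}

def SubwordEquiv (n : ℕ) (u v : List A) : Prop :=
  ∀ w : List A, w.length ≤ n → (w <+ u ↔ w <+ v)

namespace SubwordEquiv

variable {n : ℕ} {a b c : A} {u v : List A}

theorem symm (h : SubwordEquiv n u v) : SubwordEquiv n v u :=
  fun w hw => (h w hw).symm

theorem reverse (h : SubwordEquiv n u v) : SubwordEquiv n u.reverse v.reverse := by
  intro w hw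
  rw [← reverse_sublist, reverse_reverse, ← reverse_sublist (l₁ := w), reverse_reverse]
  exact h w.reverse (by rwa [length_reverse])

theorem of_cons_cons (h : SubwordEquiv (n + 1) (a :: u) (a :: v)) : SubwordEquiv n u v := by
  intro w hw
  rw [← cons_sublist_cons (a := a), ← cons_sublist_cons (a := a) (l₂ := v)]
  exact h (a :: w) (by simpa using hw)

theorem cons_eq_of_ne (hab : a ≠ b) (h : SubwordEquiv n (a :: u) (b :: v)) (hv : v.length = n)
    {w : List A} (hw : w <+ u) (hwn : w.length + 1 = n) : a :: w = v :=
  (((h (a :: w) (by simp [hwn])).mp (hw.cons_cons a)).of_cons_of_ne hab).eq_of_length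
    (by simp [hwn, hv])

theorem head_eq (hn : 2 ≤ n) (hu : u.length = n) (hv : v.length = n)
    (h : SubwordEquiv n (a :: u) (b :: v)) : a = b := by
  by_contra hab
  rcases u with _ | ⟨c, _ | ⟨c', r⟩⟩ <;> rcases v with _ | ⟨d, _ | ⟨d', s⟩⟩ <;>
    simp only [length_cons, length_nil] at hu hv <;> try omega
  have h₁ := h.cons_eq_of_ne hab (by simpa using hv) (sublist_cons_self c (c' :: r))
    (by simpa using hu)
  have h₂ := h.cons_eq_of_ne hab (by simpa using hv) ((sublist_cons_self c' r).cons_cons c)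
    (by simpa using hu)
  have h₃ := h.symm.cons_eq_of_ne (Ne.symm hab) (by simpa using hu)
    (sublist_cons_self d (d' :: s)) (by simpa using hv)
  have h₄ := h.symm.cons_eq_of_ne (Ne.symm hab) (by simpa using hu)
    ((sublist_cons_self d' s).cons_cons d) (by simpa using hv)
  simp only [cons.injEq] at h₁ h₂ h₃ h₄
  grind

theorem eq_of_append_singleton (hu : u.length = n) (hv : v.length = n)
    (h : SubwordEquiv n (u ++ [c]) (v ++ [c])) : u = v := by
  induction u generalizing n v with
  | nil => simp_all [eq_comm]
  | cons a u ih =>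
    subst hu
    rcases v with _ | ⟨b, v⟩
    · simp at hv
    simp only [length_cons, Nat.add_right_cancel_iff] at hv
    have hab : a = b := by
      cases u with
      | nil =>
        have hab := (h [a] le_rfl).mp (by simp)
        have hba := (h [b] le_rfl).mpr (by simp)
        simp only [singleton_sublist] at hab hba
        grind
      | cons => exact h.head_eq (by simp) (by simp) (by simp [hv])
    subst hab
    rw [ih rfl hv (of_cons_cons h)]

theorem eq_of_length_eq_succ (hn : 2 ≤ n) (hu : u.length = n + 1) (hv : v.length = n + 1)
    (h : SubwordEquiv n u v) : u = v := by
  obtain ⟨u, x, rfl⟩ := (eq_nil_or_concat' u).resolve_left (by rintro rfl; simp at hu)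
  obtain ⟨v, y, rfl⟩ := (eq_nil_or_concat' v).resolve_left (by rintro rfl; simp at hv)
  simp only [length_append, length_singleton, Nat.add_right_cancel_iff] at hu hv
  have hxy : x = y := by
    have := h.reverse
    simp only [reverse_append, reverse_singleton, singleton_append] at this
    exact this.head_eq hn (by simpa using hu) (by simpa using hv)
  subst hxy
  rw [h.eq_of_append_singleton hu hv]

end SubwordEquiv

end List

theorem not_n_equivalent_of_length_succ {A : Type*} (n : ℕ) (hn : 2 ≤ n)
    (u v : List A) (hu : u.length = n + 1) (hv : v.length = n + 1) (huv : u ≠ v) :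
    ∃ w : List A, w.length ≤ n ∧ ¬ (w.Sublist u ↔ w.Sublist v) := by
  by_contra h
  push Not at h
  exact huv (List.SubwordEquiv.eq_of_length_eq_succ hn hu hv h)
end

section
/- Quantifier-free satisfiability in the subword logic is NP-hard: for every Boolean formula φ(x₁,…,xₙ) in propositional variables x₁,…,xₙ, φ is satisfiable (as a Boolean formula) if and only if there exist words z, u₁,…,uₙ over a nonempty alphabet A such that φ evaluates to true under the assignment sending variable xᵢ to the truth value (uᵢ ⊑ z). -/
inductive BForm (n : ℕ) where
  | var : Fin n → BForm n
  | and : BForm n → BForm n → BForm n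
  | or : BForm n → BForm n → BForm n
  | not : BForm n → BForm n

def BForm.eval {n : ℕ} (f : Fin n → Bool) : BForm n → Bool
  | .var i => f i
  | .and φ ψ => φ.eval f && ψ.eval f
  | .or φ ψ => φ.eval f || ψ.eval f
  | .not φ => !φ.eval f

theorem sat_iff_subword_sat {A : Type*} [DecidableEq A] [Nonempty A] (n : ℕ) (φ : BForm n) :
    (∃ f : Fin n → Bool, φ.eval f = true) ↔
      ∃ (z : List A) (u : Fin n → List A),
        φ.eval (fun i => decide ((u i).Sublist z)) = true := by
  constructor
  · rintro ⟨f, hf⟩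
    obtain ⟨a⟩ := ‹Nonempty A›
    refine ⟨[], fun i => if f i then [] else [a], ?_⟩
    convert hf using 2
    funext i
    by_cases h : f i <;> simp [h]
  · rintro ⟨z, u, h⟩
    exact ⟨_, h⟩
end

section
/- Let a be a letter and suppose words x and x² satisfy: x = [a] (the one-letter word), x ⊑ x², x² ⋢ x, and every word y with y ⊑ x² satisfies y ⊑ x or x² ⊑ y. Then x² = [a,a], the word aa. -/
theorem square_of_letter {A : Type*} (a : A) (x x2 : List A)
    (hx : x = [a]) (h1 : x.Sublist x2) (h2 : ¬ x2.Sublist x)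
    (h3 : ∀ y : List A, y.Sublist x2 → y.Sublist x ∨ x2.Sublist y) :
    x2 = [a, a] := by
  subst hx
  obtain ⟨b, rest, rfl⟩ : ∃ b rest, x2 = b :: rest := by
    cases x2 with
    | nil => simpa using h1.length_le
    | cons b rest => exact ⟨b, rest, rfl⟩
  have hrest : rest.Sublist ([a] : List A) := by
    rcases h3 rest (List.sublist_cons_self b rest) with h | h
    · exact h
    · exact absurd h.length_le (by simp)
  have hb : b = a := by
    rcases h3 [b] (by simp) with h | h
    · simpa [List.sublist_singleton] using h
    · have hr : rest = [] := by
        have := h.length_le; simpa using this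
      subst hr
      exact absurd h1 (by simp [List.sublist_singleton] at h2 ⊢; tauto)
  subst hb
  rcases List.sublist_singleton.mp hrest with rfl | rfl
  · exact absurd (by simp) h2
  · rfl
end
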